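/- arXiv:2104.14267 — 2 statements merged into one kernel-verified Lean document; each statement's English description precedes it below -/
import Mathlib

section
/- Let J : ℝ² → ℝ be twice continuously differentiable with global maximum at p* = (z1*, z2*), and define V(z1, z2, z3, z4) = −J(z1, z2) + ½ z3² + ½ z4² + J(z1*, z2*). Then along any differentiable solution t ↦ (z1(t), z2(t), z3(t), z4(t)) of the closed-loop system, the function t ↦ V(z1(t), z2(t), z3(t), z4(t)) is differentiable with derivative d/dt V = −k1 ⟨∇J(z1(t), z2(t)), (z3(t), z4(t))⟩², which is ≤ 0 for all t. -/
open Real Filter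

/-- First component of the gradient of `J : ℝ² → ℝ`, i.e. `∂J/∂z1`. -/
noncomputable def gradJ1 (J : ℝ × ℝ → ℝ) (p : ℝ × ℝ) : ℝ := fderiv ℝ J p (1, 0)

/-- Second component of the gradient of `J : ℝ² → ℝ`, i.e. `∂J/∂z2`. -/
noncomputable def gradJ2 (J : ℝ × ℝ → ℝ) (p : ℝ × ℝ) : ℝ := fderiv ℝ J p (0, 1)

/-- The closed-loop unicycle system under the projected gradient-ascent control law:
`ż1 = k1⟨∇J,(z3,z4)⟩ z3`, `ż2 = k1⟨∇J,(z3,z4)⟩ z4`,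
`ż3 = k2⟨∇J⊥,(z3,z4)⟩ z4`, `ż4 = −k2⟨∇J⊥,(z3,z4)⟩ z3`,
where `∇J⊥ = (∂J/∂z2, −∂J/∂z1)` and the equations hold for all `t ∈ s`. -/
def ClosedLoop (J : ℝ × ℝ → ℝ) (k1 k2 : ℝ) (z1 z2 z3 z4 : ℝ → ℝ) (s : Set ℝ) : Prop :=
  ∀ t ∈ s,
    HasDerivAt z1
      (k1 * (gradJ1 J (z1 t, z2 t) * z3 t + gradJ2 J (z1 t, z2 t) * z4 t) * z3 t) t ∧
    HasDerivAt z2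
      (k1 * (gradJ1 J (z1 t, z2 t) * z3 t + gradJ2 J (z1 t, z2 t) * z4 t) * z4 t) t ∧
    HasDerivAt z3
      (k2 * (gradJ2 J (z1 t, z2 t) * z3 t - gradJ1 J (z1 t, z2 t) * z4 t) * z4 t) t ∧
    HasDerivAt z4
      (-(k2 * (gradJ2 J (z1 t, z2 t) * z3 t - gradJ1 J (z1 t, z2 t) * z4 t)) * z3 t) t

/- Along the closed loop the heading `(z3, z4)` is only rotated, so `½(z3² + z4²)` is constant,
while `J(z1, z2)` increases at rate `k1⟨∇J, (z3, z4)⟩²` by the chain rule. Hence `V` decreases at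
exactly that rate. -/

theorem fderiv_apply_eq_gradJ (J : ℝ × ℝ → ℝ) (p : ℝ × ℝ) (a b : ℝ) :
    fderiv ℝ J p (a, b) = a * gradJ1 J p + b * gradJ2 J p := by
  have hab : ((a, b) : ℝ × ℝ) = a • ((1 : ℝ), (0 : ℝ)) + b • ((0 : ℝ), (1 : ℝ)) := by simp
  rw [hab, map_add, map_smul, map_smul, gradJ1, gradJ2, smul_eq_mul, smul_eq_mul]

theorem DifferentiableAt.hasDerivAt_comp_prodMk {J : ℝ × ℝ → ℝ} {x y : ℝ → ℝ} {x' y' t : ℝ}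
    (hJ : DifferentiableAt ℝ J (x t, y t)) (hx : HasDerivAt x x' t) (hy : HasDerivAt y y' t) :
    HasDerivAt (fun s => J (x s, y s))
      (x' * gradJ1 J (x t, y t) + y' * gradJ2 J (x t, y t)) t := by
  rw [← fderiv_apply_eq_gradJ]
  exact hJ.hasFDerivAt.comp_hasDerivAt t (hx.prodMk hy)

namespace ClosedLoop

variable {J : ℝ × ℝ → ℝ} {k1 k2 : ℝ} {z1 z2 z3 z4 : ℝ → ℝ} {s : Set ℝ} {t : ℝ}

theorem hasDerivAt_objective (hsol : ClosedLoop J k1 k2 z1 z2 z3 z4 s) (ht : t ∈ s)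
    (hJ : DifferentiableAt ℝ J (z1 t, z2 t)) :
    HasDerivAt (fun τ => J (z1 τ, z2 τ))
      (k1 * (gradJ1 J (z1 t, z2 t) * z3 t + gradJ2 J (z1 t, z2 t) * z4 t) ^ 2) t := by
  obtain ⟨h1, h2, -, -⟩ := hsol t ht
  exact (hJ.hasDerivAt_comp_prodMk h1 h2).congr_deriv (by ring)

theorem hasDerivAt_heading_energy (hsol : ClosedLoop J k1 k2 z1 z2 z3 z4 s) (ht : t ∈ s) :
    HasDerivAt (fun τ => z3 τ ^ 2 / 2 + z4 τ ^ 2 / 2) 0 t := by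
  obtain ⟨-, -, h3, h4⟩ := hsol t ht
  exact (((h3.fun_pow 2).div_const 2).add ((h4.fun_pow 2).div_const 2)).congr_deriv (by ring)

theorem hasDerivAt_lyapunov (hsol : ClosedLoop J k1 k2 z1 z2 z3 z4 s) (ht : t ∈ s)
    (hJ : DifferentiableAt ℝ J (z1 t, z2 t)) (c : ℝ) :
    HasDerivAt (fun τ => -J (z1 τ, z2 τ) + z3 τ ^ 2 / 2 + z4 τ ^ 2 / 2 + c)
      (-(k1 * (gradJ1 J (z1 t, z2 t) * z3 t + gradJ2 J (z1 t, z2 t) * z4 t) ^ 2)) t := by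
  have hV := ((hsol.hasDerivAt_objective ht hJ).fun_neg.fun_add
    (hsol.hasDerivAt_heading_energy ht)).add_const c
  rw [add_zero] at hV
  exact hV.congr_of_eventuallyEq (.of_forall fun τ => by ring)

end ClosedLoop

theorem stmt1_general (J : ℝ × ℝ → ℝ) (hJ : ContDiff ℝ 2 J)
    (pstar : ℝ × ℝ)
    (k1 k2 : ℝ) (hk1 : 0 < k1)
    (z1 z2 z3 z4 : ℝ → ℝ)
    (hsol : ClosedLoop J k1 k2 z1 z2 z3 z4 Set.univ) :
    ∀ t : ℝ,
      HasDerivAt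
        (fun s => -J (z1 s, z2 s) + (z3 s) ^ 2 / 2 + (z4 s) ^ 2 / 2 + J pstar)
        (-(k1 * (gradJ1 J (z1 t, z2 t) * z3 t + gradJ2 J (z1 t, z2 t) * z4 t) ^ 2)) t ∧
      -(k1 * (gradJ1 J (z1 t, z2 t) * z3 t + gradJ2 J (z1 t, z2 t) * z4 t) ^ 2) ≤ 0 := by
  intro t
  have hJt : DifferentiableAt ℝ J (z1 t, z2 t) := (hJ.differentiable two_ne_zero).differentiableAt
  refine ⟨hsol.hasDerivAt_lyapunov (Set.mem_univ t) hJt (J pstar), ?_⟩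
  exact neg_nonpos.mpr (mul_nonneg hk1.le (sq_nonneg _))

/-- Along any differentiable solution of the closed-loop system, the Lyapunov
function `V = −J(z1,z2) + ½z3² + ½z4² + J(pstar)` is differentiable in `t` with derivative
`−k1⟨∇J(z1,z2),(z3,z4)⟩² ≤ 0`. -/
theorem stmt1 (J : ℝ × ℝ → ℝ) (hJ : ContDiff ℝ 2 J)
    (pstar : ℝ × ℝ) (hmax : ∀ p : ℝ × ℝ, J p ≤ J pstar)
    (k1 k2 : ℝ) (hk1 : 0 < k1) (hk2 : 0 < k2)
    (z1 z2 z3 z4 : ℝ → ℝ)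
    (hsol : ClosedLoop J k1 k2 z1 z2 z3 z4 Set.univ) :
    ∀ t : ℝ,
      HasDerivAt
        (fun s => -J (z1 s, z2 s) + (z3 s) ^ 2 / 2 + (z4 s) ^ 2 / 2 + J pstar)
        (-(k1 * (gradJ1 J (z1 t, z2 t) * z3 t + gradJ2 J (z1 t, z2 t) * z4 t) ^ 2)) t ∧
      -(k1 * (gradJ1 J (z1 t, z2 t) * z3 t + gradJ2 J (z1 t, z2 t) * z4 t) ^ 2) ≤ 0 :=
  stmt1_general J hJ pstar k1 k2 hk1 z1 z2 z3 z4 hsol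
end

section
/- Let J : ℝ² → ℝ be twice continuously differentiable and strictly concave on ℝ² with global maximum at p* = (z1*, z2*). If t ↦ (z1(t), z2(t), z3(t), z4(t)) is a differentiable solution of the closed-loop system defined for all t ≥ 0 with z3(0)² + z4(0)² = 1 and such that ⟨∇J(z1(t), z2(t)), (z3(t), z4(t))⟩ = 0 for all t ≥ 0, then (z1(t), z2(t)) = (z1*, z2*) for all t ≥ 0. -/
open Real Filter

open Set

/-!
Along a solution with `⟨∇J, (z3, z4)⟩ ≡ 0` the position `(z1, z2)` does not move, so the
gradient is a constant vector `g`. Then `φ = ⟨g, (z3, z4)⟩` vanishes identically, while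
differentiating it gives `φ' = -k2 ⟨g⊥, (z3, z4)⟩²`; hence `g` is orthogonal to both `(z3, z4)`
and its rotation, which span the plane, so `g = 0`. A critical point of a concave function is a
global maximum, and a strictly concave function has at most one.
-/

theorem ConcaveOn.isMaxOn_of_hasFDerivAt_eq_zero {E : Type*} [NormedAddCommGroup E]
    [NormedSpace ℝ E] {s : Set E} {f : E → ℝ} {x : E} (hf : ConcaveOn ℝ s f) (hx : x ∈ s)
    (hf' : HasFDerivAt f (0 : E →L[ℝ] ℝ) x) : IsMaxOn f s x := by
  intro y hy
  let g : ℝ →ᵃ[ℝ] E := AffineMap.lineMap x y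
  have hg : HasDerivAt (f ∘ g) 0 0 := by
    have hg0 : g 0 = x := AffineMap.lineMap_apply_zero x y
    simpa using (hg0 ▸ hf').comp_hasDerivAt (0 : ℝ) AffineMap.hasDerivAt_lineMap
  have hslope := (hf.comp_affineMap g).slope_le_of_hasDerivAt (x := 0) (y := 1)
    (by simpa [g] using hx) (by simpa [g] using hy) one_pos hg
  simpa [slope, g] using hslope

theorem eq_of_forall_hasDerivAt_zero_of_ge {E : Type*} [NormedAddCommGroup E] [NormedSpace ℝ E]
    {f : ℝ → E} {a : ℝ} (hf : ∀ t ≥ a, HasDerivAt f 0 t) : ∀ t ≥ a, f t = f a := fun t ht =>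
  constant_of_has_deriv_right_zero (fun x hx => (hf x hx.1).continuousAt.continuousWithinAt)
    (fun x hx => (hf x hx.1).hasDerivWithinAt) t ⟨ht, le_rfl⟩

theorem HasDerivAt.eq_zero_of_forall_ge {E : Type*} [NormedAddCommGroup E] [NormedSpace ℝ E]
    {f : ℝ → E} {f' c : E} {a : ℝ} (hf : HasDerivAt f f' a) (hc : ∀ t ≥ a, f t = c) :
    f' = 0 :=
  (uniqueDiffWithinAt_Ici a).eq_deriv _ hf.hasDerivWithinAt <|
    (hasDerivWithinAt_const a _ c).congr hc (hc a le_rfl)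

theorem eq_zero_of_mul_add_mul_eq_zero_of_mul_sub_mul_eq_zero {a b c s : ℝ}
    (h : a * c + b * s = 0) (h' : b * c - a * s = 0) (hcs : c ^ 2 + s ^ 2 = 1) :
    a = 0 ∧ b = 0 :=
  ⟨by linear_combination c * h - s * h' - a * hcs, by linear_combination s * h + c * h' - b * hcs⟩

theorem fderiv_eq_zero_of_gradJ_eq_zero {J : ℝ × ℝ → ℝ} {p : ℝ × ℝ} (h₁ : gradJ1 J p = 0)
    (h₂ : gradJ2 J p = 0) : fderiv ℝ J p = 0 := by
  refine ContinuousLinearMap.prod_ext ?_ ?_ <;> ext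
  exacts [h₁, h₂]

namespace ClosedLoop

variable {J : ℝ × ℝ → ℝ} {k1 k2 : ℝ} {z1 z2 z3 z4 : ℝ → ℝ} {t₀ : ℝ}

theorem position_eq (hsol : ClosedLoop J k1 k2 z1 z2 z3 z4 (Ici t₀))
    (hperp : ∀ t ≥ t₀, gradJ1 J (z1 t, z2 t) * z3 t + gradJ2 J (z1 t, z2 t) * z4 t = 0) :
    ∀ t ≥ t₀, (z1 t, z2 t) = (z1 t₀, z2 t₀) := by
  have hz1 := eq_of_forall_hasDerivAt_zero_of_ge fun t ht => by
    simpa [hperp t ht] using (hsol t ht).1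
  have hz2 := eq_of_forall_hasDerivAt_zero_of_ge fun t ht => by
    simpa [hperp t ht] using (hsol t ht).2.1
  intro t ht
  rw [hz1 t ht, hz2 t ht]

theorem gradJ_eq_zero (hsol : ClosedLoop J k1 k2 z1 z2 z3 z4 (Ici t₀)) (hk2 : k2 ≠ 0)
    (hunit : z3 t₀ ^ 2 + z4 t₀ ^ 2 = 1)
    (hperp : ∀ t ≥ t₀, gradJ1 J (z1 t, z2 t) * z3 t + gradJ2 J (z1 t, z2 t) * z4 t = 0) :
    gradJ1 J (z1 t₀, z2 t₀) = 0 ∧ gradJ2 J (z1 t₀, z2 t₀) = 0 := by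
  set a := gradJ1 J (z1 t₀, z2 t₀)
  set b := gradJ2 J (z1 t₀, z2 t₀)
  have hφ : ∀ t ≥ t₀, a * z3 t + b * z4 t = 0 := fun t ht => by
    simpa only [hsol.position_eq hperp t ht] using hperp t ht
  obtain ⟨-, -, h₃, h₄⟩ := hsol t₀ self_mem_Ici
  have hcross : -k2 * (b * z3 t₀ - a * z4 t₀) ^ 2 = 0 := by
    refine Eq.trans ?_ (((h₃.const_mul a).add (h₄.const_mul b)).eq_zero_of_forall_ge hφ)
    ring
  have hcross' : b * z3 t₀ - a * z4 t₀ = 0 := by simpa [hk2] using hcross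
  exact eq_zero_of_mul_add_mul_eq_zero_of_mul_sub_mul_eq_zero (hφ t₀ le_rfl) hcross' hunit

end ClosedLoop

theorem stmt7_general (J : ℝ × ℝ → ℝ) (hJ : ContDiff ℝ 2 J)
    (hconc : StrictConcaveOn ℝ Set.univ J)
    (pstar : ℝ × ℝ) (hmax : ∀ p : ℝ × ℝ, J p ≤ J pstar)
    (k1 k2 : ℝ) (hk2 : 0 < k2)
    (z1 z2 z3 z4 : ℝ → ℝ)
    (hsol : ClosedLoop J k1 k2 z1 z2 z3 z4 (Set.Ici 0))
    (hinit : z3 0 ^ 2 + z4 0 ^ 2 = 1)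
    (hperp : ∀ t ≥ (0 : ℝ),
      gradJ1 J (z1 t, z2 t) * z3 t + gradJ2 J (z1 t, z2 t) * z4 t = 0) :
    ∀ t ≥ (0 : ℝ), (z1 t, z2 t) = pstar := by
  intro t ht
  obtain ⟨h₁, h₂⟩ := hsol.gradJ_eq_zero hk2.ne' hinit hperp
  have hcrit : HasFDerivAt J (0 : ℝ × ℝ →L[ℝ] ℝ) (z1 0, z2 0) := by
    rw [← fderiv_eq_zero_of_gradJ_eq_zero h₁ h₂]
    exact (hJ.differentiable two_ne_zero _).hasFDerivAt
  have hmax₀ := hconc.concaveOn.isMaxOn_of_hasFDerivAt_eq_zero (mem_univ _) hcrit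
  rw [hsol.position_eq hperp t ht]
  exact hconc.eq_of_isMaxOn hmax₀ (fun p _ => hmax p) (mem_univ _) (mem_univ _)

/-- For strictly concave `J` with global maximum at `pstar`, if a solution of
the closed-loop system on `[0,∞)` starts on the unit circle in `(z3, z4)` and satisfies
`⟨∇J(z1,z2),(z3,z4)⟩ = 0` for all `t ≥ 0`, then `(z1(t), z2(t)) = pstar` for all `t ≥ 0`. -/
theorem stmt7 (J : ℝ × ℝ → ℝ) (hJ : ContDiff ℝ 2 J)
    (hconc : StrictConcaveOn ℝ Set.univ J)
    (pstar : ℝ × ℝ) (hmax : ∀ p : ℝ × ℝ, J p ≤ J pstar)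
    (k1 k2 : ℝ) (hk1 : 0 < k1) (hk2 : 0 < k2)
    (z1 z2 z3 z4 : ℝ → ℝ)
    (hsol : ClosedLoop J k1 k2 z1 z2 z3 z4 (Set.Ici 0))
    (hinit : z3 0 ^ 2 + z4 0 ^ 2 = 1)
    (hperp : ∀ t ≥ (0 : ℝ),
      gradJ1 J (z1 t, z2 t) * z3 t + gradJ2 J (z1 t, z2 t) * z4 t = 0) :
    ∀ t ≥ (0 : ℝ), (z1 t, z2 t) = pstar :=
  stmt7_general J hJ hconc pstar hmax k1 k2 hk2 z1 z2 z3 z4 hsol hinit hperp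
end
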